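/- arXiv:2102.07487 — 4 statements merged into one kernel-verified Lean document; each statement's English description precedes it below -/
import Mathlib

section
/- Let c > 0 and let K ⊂ ℝ be a closed set with K ∩ (0, c] = ∅. Let f : [0, c] → ℝ be a continuous function with f(0) = c, and suppose that for every τ ∈ [0, c], either f(τ) ∈ K or f(τ) = c − τ. Then f(τ) = c − τ for all τ ∈ [0, c]. -/
/-- Abstract connectedness argument for bifurcation diagrams: if `f` is continuous on
`[0,c]`, `f 0 = c`, and for every `τ` either `f τ` lies in a closed set `K` disjoint
from `(0,c]` or `f τ = c − τ`, then `f τ = c − τ` for all `τ ∈ [0,c]`. -/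
theorem bifurcation_follows_line
    (c : ℝ) (hc : 0 < c) (K : Set ℝ) (hK : IsClosed K)
    (hKc : K ∩ Set.Ioc 0 c = ∅)
    (f : ℝ → ℝ) (hf : ContinuousOn f (Set.Icc 0 c)) (hf0 : f 0 = c)
    (halt : ∀ τ ∈ Set.Icc 0 c, f τ ∈ K ∨ f τ = c - τ) :
    ∀ τ ∈ Set.Icc 0 c, f τ = c - τ := by
  have hKnot : ∀ x ∈ Set.Ioc 0 c, x ∉ K := by
    intro x hx hxK
    have : x ∈ K ∩ Set.Ioc 0 c := ⟨hxK, hx⟩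
    rw [hKc] at this
    exact this
  set A : Set ℝ := Set.Icc 0 c ∩ (fun τ => f τ - (c - τ)) ⁻¹' {0} with hA
  set B : Set ℝ := Set.Icc 0 c ∩ f ⁻¹' K with hB
  have hAcl : IsClosed A :=
    (hf.sub (continuous_const.sub continuous_id).continuousOn).preimage_isClosed_of_isClosed
      isClosed_Icc isClosed_singleton
  have hBcl : IsClosed B := hf.preimage_isClosed_of_isClosed isClosed_Icc hK
  have hline : ∀ τ ∈ Set.Ico 0 c, f τ = c - τ := by
    by_contra hne
    push_neg at hne
    obtain ⟨τ₀, hτ₀, hτ₀ne⟩ := hne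
    have hpre := isPreconnected_Ico (a := (0:ℝ)) (b := c)
    have hcov : Set.Ico 0 c ⊆ Aᶜ ∪ Bᶜ := by
      intro x hx
      by_contra hx'
      simp only [Set.mem_union, Set.mem_compl_iff, not_or, not_not] at hx'
      obtain ⟨hxA, hxB⟩ := hx'
      have hfx : f x = c - x := by
        have := hxA.2
        simp only [Set.mem_preimage, Set.mem_singleton_iff] at this
        linarith
      exact hKnot (f x) (hfx ▸ ⟨by linarith [hx.2], by linarith [hx.1]⟩) hxB.2
    have hne1 : (Set.Ico 0 c ∩ Aᶜ).Nonempty := by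
      refine ⟨τ₀, hτ₀, ?_⟩
      simp only [Set.mem_compl_iff, hA, Set.mem_inter_iff, Set.mem_preimage,
        Set.mem_singleton_iff, not_and]
      intro _
      intro h
      exact hτ₀ne (by linarith)
    have hne2 : (Set.Ico 0 c ∩ Bᶜ).Nonempty := by
      refine ⟨0, ⟨le_refl 0, hc⟩, ?_⟩
      simp only [Set.mem_compl_iff, hB, Set.mem_inter_iff, Set.mem_preimage, not_and]
      intro _
      rw [hf0]
      exact hKnot c ⟨hc, le_refl c⟩
    obtain ⟨x, hx, hxA, hxB⟩ :=
      hpre Aᶜ Bᶜ hAcl.isOpen_compl hBcl.isOpen_compl hcov hne1 hne2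
    have hxIcc : x ∈ Set.Icc 0 c := ⟨hx.1, le_of_lt hx.2⟩
    rcases halt x hxIcc with h | h
    · exact hxB ⟨hxIcc, h⟩
    · exact hxA ⟨hxIcc, by simp [h]⟩
  intro τ hτ
  rcases lt_or_eq_of_le hτ.2 with h | h
  · exact hline τ ⟨hτ.1, h⟩
  · subst h
    have hcl : τ ∈ closure (Set.Ico 0 τ) := by
      rw [closure_Ico hc.ne]
      exact ⟨le_of_lt hc, le_refl τ⟩
    have hnb : (nhdsWithin τ (Set.Ico 0 τ)).NeBot :=
      mem_closure_iff_nhdsWithin_neBot.mp hcl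
    have h1 : Filter.Tendsto f (nhdsWithin τ (Set.Ico 0 τ)) (nhds (f τ)) :=
      (hf τ ⟨le_of_lt hc, le_refl τ⟩).mono_left
        (nhdsWithin_mono τ Set.Ico_subset_Icc_self)
    have h2 : Filter.Tendsto f (nhdsWithin τ (Set.Ico 0 τ)) (nhds (τ - τ)) := by
      have : Filter.Tendsto (fun x => τ - x) (nhdsWithin τ (Set.Ico 0 τ)) (nhds (τ - τ)) :=
        ((continuous_const.sub continuous_id).tendsto τ).mono_left nhdsWithin_le_nhds
      refine this.congr' ?_
      filter_upwards [self_mem_nhdsWithin] with x hx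
      exact (hline x hx).symm
    exact tendsto_nhds_unique h1 h2
end

section
/- Let a ≥ 0 and let ℓ₁,…,ℓ_m : ℝ → ℝ be finitely many affine functions ℓ_i(τ) = s_i τ + b_i with s_i ≥ 0 and b_i ≥ 0. Let f : [0,1] → ℝ be continuous such that for every τ ∈ [0,1] there exists i with f(τ) = ℓ_i(τ), and suppose there exists ε > 0 with f(τ) = aτ for all τ ∈ [0, ε]. Then f(τ) ≤ aτ for all τ ∈ [0,1]. -/
open Topology Filter


/-- If a continuous function `f` on `[0,1]` always lies on one of finitely many affine
lines with nonnegative slopes and nonnegative starting points, and initially follows the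
line `τ ↦ a·τ` through the origin, then `f τ ≤ a·τ` on all of `[0,1]`. -/
theorem bifurcation_bounded_by_initial_line
    (a : ℝ) (ha : 0 ≤ a) (m : ℕ) (s b : Fin m → ℝ)
    (hs : ∀ i, 0 ≤ s i) (hb : ∀ i, 0 ≤ b i)
    (f : ℝ → ℝ) (hf : ContinuousOn f (Set.Icc 0 1))
    (hlines : ∀ τ ∈ Set.Icc (0:ℝ) 1, ∃ i, f τ = s i * τ + b i)
    (ε : ℝ) (hε : 0 < ε) (hinit : ∀ τ ∈ Set.Icc 0 ε, f τ = a * τ) :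
    ∀ τ ∈ Set.Icc (0:ℝ) 1, f τ ≤ a * τ := by
  by_contra h
  push_neg at h
  obtain ⟨τ₁, hτ₁, hfτ₁⟩ := h
  set S : Set ℝ := {τ | τ ∈ Set.Icc (0:ℝ) 1 ∧ a * τ < f τ} with hSdef
  have hSne : S.Nonempty := ⟨τ₁, hτ₁, hfτ₁⟩
  have hSbdd : BddBelow S := ⟨0, fun x hx => hx.1.1⟩
  set τ₀ := sInf S with hτ₀def
  have hSsub : S ⊆ Set.Icc 0 1 := fun x hx => hx.1
  have hτ₀mem : τ₀ ∈ Set.Icc (0:ℝ) 1 := by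
    refine ⟨le_csInf hSne fun x hx => hx.1.1, ?_⟩
    exact (csInf_le hSbdd ⟨hτ₁, hfτ₁⟩).trans hτ₁.2
  -- every element of S is > ε, so τ₀ ≥ ε > 0
  have hεle : ε ≤ τ₀ := by
    apply le_csInf hSne
    intro x hx
    by_contra hlt
    push_neg at hlt
    have : f x = a * x := hinit x ⟨hx.1.1, hlt.le⟩
    have := hx.2
    linarith
  have hτ₀pos : 0 < τ₀ := lt_of_lt_of_le hε hεle
  -- points strictly below τ₀ in [0,1] satisfy f τ ≤ a τ
  have hbelow : ∀ x ∈ Set.Ico (0:ℝ) τ₀, f x ≤ a * x := by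
    intro x hx
    by_contra hlt
    push_neg at hlt
    have hxS : x ∈ S := ⟨⟨hx.1, hx.2.le.trans hτ₀mem.2⟩, hlt⟩
    exact absurd (csInf_le hSbdd hxS) (not_le.2 hx.2)
  -- f τ₀ ≤ a τ₀ via the left limit
  have hne1 : (𝓝[Set.Ico (0:ℝ) τ₀] τ₀).NeBot := by
    rw [← mem_closure_iff_nhdsWithin_neBot, closure_Ico hτ₀pos.ne]
    exact Set.right_mem_Icc.2 hτ₀pos.le
  have hcl : ContinuousWithinAt f (Set.Ico 0 τ₀) τ₀ :=
    (hf τ₀ hτ₀mem).mono (fun x hx => ⟨hx.1, hx.2.le.trans hτ₀mem.2⟩)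
  have key1 : f τ₀ ≤ a * τ₀ := by
    refine le_of_tendsto_of_tendsto hcl.tendsto
      (((continuous_const.mul continuous_id).tendsto τ₀).mono_left nhdsWithin_le_nhds)
      (eventually_mem_nhdsWithin.mono fun x hx => hbelow x hx)
  -- a τ₀ ≤ f τ₀ via approximation from S
  have hne2 : (𝓝[S] τ₀).NeBot := by
    rw [← mem_closure_iff_nhdsWithin_neBot]
    exact csInf_mem_closure hSne hSbdd
  have hcS : ContinuousWithinAt f S τ₀ := (hf τ₀ hτ₀mem).mono hSsub
  have key2 : a * τ₀ ≤ f τ₀ := by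
    exact le_of_tendsto_of_tendsto
      (((continuous_const.mul continuous_id).tendsto τ₀).mono_left nhdsWithin_le_nhds)
      hcS.tendsto (eventually_mem_nhdsWithin.mono fun x hx => hx.2.le)
  have hfτ₀ : f τ₀ = a * τ₀ := le_antisymm key1 key2
  -- lines passing through (τ₀, a τ₀) stay below a τ for τ ≥ τ₀
  have hline_le : ∀ i, s i * τ₀ + b i = a * τ₀ → ∀ τ, τ₀ ≤ τ → s i * τ + b i ≤ a * τ := by
    intro i hi τ hτ
    have hsi : s i ≤ a := by nlinarith [hb i]
    nlinarith
  -- eventually near τ₀, any line f lies on must pass through (τ₀, a τ₀)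
  have hev : ∀ᶠ τ in 𝓝[Set.Icc (0:ℝ) 1] τ₀,
      ∀ j, f τ = s j * τ + b j → s j * τ₀ + b j = a * τ₀ := by
    rw [Filter.eventually_all]
    intro j
    by_cases hj : s j * τ₀ + b j = a * τ₀
    · exact Filter.Eventually.of_forall fun τ _ => hj
    · have hcont : ContinuousWithinAt (fun τ => f τ - (s j * τ + b j))
          (Set.Icc 0 1) τ₀ := by
        exact (hf τ₀ hτ₀mem).sub
          ((continuous_const.mul continuous_id).add continuous_const).continuousWithinAt
      have hne : f τ₀ - (s j * τ₀ + b j) ≠ 0 := by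
        rw [hfτ₀]; intro h0; exact hj (by linarith)
      filter_upwards [hcont.tendsto.eventually_ne hne] with τ hτ heq
      exact absurd (by rw [heq]; ring) hτ
  obtain ⟨δ, hδ, hδ'⟩ := Metric.mem_nhdsWithin_iff.1 hev
  obtain ⟨x, hxS, hxlt⟩ := Real.lt_sInf_add_pos hSne hδ
  have hxτ₀ : τ₀ ≤ x := csInf_le hSbdd hxS
  have hdist : dist x τ₀ < δ := by
    rw [Real.dist_eq, abs_of_nonneg (by linarith)]
    linarith
  have hP := hδ' ⟨Metric.mem_ball.2 hdist, hxS.1⟩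
  obtain ⟨i, hi⟩ := hlines x hxS.1
  have : f x ≤ a * x := hi ▸ hline_le i (hP i hi) x hxτ₀
  exact absurd hxS.2 (not_lt.2 this)
end

section
/- Let a₁,…,a_n be positive real numbers with pairwise irrational ratios a_i/a_j for i ≠ j, and define for k ∈ {1,…,n} and integers ℓ ≥ 1 the quantity r(k,ℓ) = 2·a_k·ℓ / (CZ(k,ℓ) − n + 1), where CZ(k,ℓ) = n − 1 + 2·∑_{j=1}^n ⌊ℓ·a_k/a_j⌋. Then sup_{k,ℓ} r(k,ℓ) = min_j a_j, and the supremum is attained at ℓ = 1 and k = argmin_j a_j. -/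
open scoped BigOperators

/-- The action–index ratio `r(k,ℓ) = 2·a_k·ℓ/(CZ(k,ℓ) − n + 1)` of the Reeb orbit
`γ_{k,ℓ}` on the boundary of the ellipsoid `E(a₁,…,a_n)` (with `n` replaced by `n+1`
indices here), where `CZ(k,ℓ) = n − 1 + 2·∑_j ⌊ℓ·a_k/a_j⌋`. -/
noncomputable def czRatio (n : ℕ) (a : Fin (n + 1) → ℝ) (k : Fin (n + 1)) (ℓ : ℕ+) : ℝ :=
  2 * a k * (ℓ : ℝ) /
    ((((n + 1 : ℕ) : ℝ) - 1 + 2 * ((∑ j, ⌊(ℓ : ℝ) * a k / a j⌋ : ℤ) : ℝ))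
      - ((n + 1 : ℕ) : ℝ) + 1)

lemma czRatio_eq (n : ℕ) (a : Fin (n + 1) → ℝ) (k : Fin (n + 1)) (ℓ : ℕ+) :
    czRatio n a k ℓ =
      2 * a k * (ℓ : ℝ) / (2 * ((∑ j, ⌊(ℓ : ℝ) * a k / a j⌋ : ℤ) : ℝ)) := by
  unfold czRatio
  congr 1
  push_cast
  ring

/-- For a generic ellipsoid (pairwise irrational ratios of the semi-axes),
`sup_{k,ℓ} r(k,ℓ) = min_j a_j`, and the supremum is attained at `ℓ = 1` and the index
realizing the minimum. -/
theorem ellipsoid_ratio_invariant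
    (n : ℕ) (a : Fin (n + 1) → ℝ) (ha : ∀ j, 0 < a j)
    (hirr : ∀ i j, i ≠ j → Irrational (a i / a j)) :
    IsGreatest (Set.range fun p : Fin (n + 1) × ℕ+ => czRatio n a p.1 p.2)
        (Finset.univ.inf' Finset.univ_nonempty a) ∧
      ∀ k, a k = Finset.univ.inf' Finset.univ_nonempty a →
        czRatio n a k 1 = Finset.univ.inf' Finset.univ_nonempty a := by
  set m := Finset.univ.inf' Finset.univ_nonempty a with hm
  have hmle : ∀ j, m ≤ a j := fun j => Finset.inf'_le _ (Finset.mem_univ j)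
  obtain ⟨j₀, -, hj₀⟩ := Finset.exists_mem_eq_inf' Finset.univ_nonempty a
  have hmpos : 0 < m := by rw [hm, hj₀]; exact ha j₀
  have hane : ∀ i j : Fin (n+1), i ≠ j → a i ≠ a j := by
    intro i j h hij
    have h2 := hirr i j h
    rw [hij, div_self (ha j).ne'] at h2
    exact h2 ⟨1, by norm_num⟩
  -- value at (k, 1) for k realizing the minimum
  have hval : ∀ k, a k = m → czRatio n a k 1 = a k := by
    intro k hk
    have hsum : (∑ j, ⌊((1 : ℕ+) : ℝ) * a k / a j⌋) = 1 := by
      rw [Finset.sum_eq_single k]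
      · norm_num [div_self (ha k).ne']
      · intro j _ hj
        have h1 : a k < a j := lt_of_le_of_ne (hk ▸ hmle j) (hane k j (Ne.symm hj))
        rw [Int.floor_eq_zero_iff, Set.mem_Ico]
        have h0 : ((1 : ℕ+) : ℝ) = 1 := by norm_num
        rw [h0, one_mul]
        exact ⟨div_nonneg (ha k).le (ha j).le, (div_lt_one (ha j)).mpr h1⟩
      · simp
    rw [czRatio_eq, hsum]
    norm_num
  constructor
  · constructor
    · exact ⟨(j₀, 1), (hval j₀ hj₀.symm).trans hj₀.symm⟩
    · rintro x ⟨⟨k, ℓ⟩, rfl⟩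
      simp only
      rw [czRatio_eq]
      set S : ℤ := ∑ j, ⌊(ℓ : ℝ) * a k / a j⌋ with hS
      have hterm : ∀ j, 0 ≤ ⌊(ℓ : ℝ) * a k / a j⌋ := by
        intro j
        apply Int.floor_nonneg.mpr
        have := ha k; have := ha j; have := ℓ.pos
        positivity
      have hkterm : ⌊(ℓ : ℝ) * a k / a k⌋ = (ℓ : ℤ) := by
        rw [mul_div_assoc, div_self (ha k).ne', mul_one]
        exact_mod_cast Int.floor_natCast (ℓ : ℕ)
      have hge : (ℓ : ℤ) ≤ S := by
        rw [hS, ← hkterm]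
        exact Finset.single_le_sum (fun j _ => hterm j) (Finset.mem_univ k)
      have hSpos : (0 : ℝ) < (S : ℝ) := by
        have : (0 : ℤ) < S := lt_of_lt_of_le (by exact_mod_cast ℓ.pos) hge
        exact_mod_cast this
      have key : a k * (ℓ : ℝ) ≤ m * (S : ℝ) := by
        by_cases hk : k = j₀
        · subst hk
          have hak : a k = m := hj₀.symm
          rw [hak]
          have : ((ℓ : ℤ) : ℝ) ≤ (S : ℝ) := by exact_mod_cast hge
          have hl : ((ℓ : ℕ) : ℝ) ≤ (S : ℝ) := by push_cast at this ⊢; linarith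
          nlinarith [hmpos]
        · -- S ≥ ℓ + ⌊ℓ a_k / m⌋
          have hpair : (ℓ : ℤ) + ⌊(ℓ : ℝ) * a k / a j₀⌋ ≤ S := by
            have hsub : ({k, j₀} : Finset (Fin (n+1))) ⊆ Finset.univ := Finset.subset_univ _
            have := Finset.sum_le_sum_of_subset_of_nonneg hsub
              (fun j _ _ => hterm j)
            rwa [Finset.sum_pair hk, hkterm] at this
          have hfloor : (ℓ : ℝ) * a k / a j₀ - 1 < (⌊(ℓ : ℝ) * a k / a j₀⌋ : ℝ) :=
            Int.sub_one_lt_floor _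
          have hpair' : ((ℓ : ℕ) : ℝ) + (⌊(ℓ : ℝ) * a k / a j₀⌋ : ℝ) ≤ (S : ℝ) := by
            exact_mod_cast hpair
          have hml : (1 : ℝ) ≤ ((ℓ : ℕ) : ℝ) := by exact_mod_cast ℓ.one_le
          have haj₀ : a j₀ = m := hj₀.symm
          rw [haj₀] at hfloor hpair'
          have h1 : (ℓ : ℝ) * a k / m + ((ℓ : ℕ) : ℝ) - 1 < (S : ℝ) := by linarith
          have h2 : (ℓ : ℝ) * a k / m ≤ (S : ℝ) := by linarith
          calc a k * (ℓ : ℝ) = m * ((ℓ : ℝ) * a k / m) := by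
                field_simp
            _ ≤ m * (S : ℝ) := by nlinarith
      rw [div_le_iff₀ (by positivity)]
      nlinarith
  · intro k hk
    rw [hval k hk, hk]
end

section
/- Let c be a real-valued functional on Hamiltonians on a closed symplectic manifold satisfying stability (∫min(F−G) ≤ c(F)−c(G) ≤ ∫max(F−G)) and spectrality with respect to a fixed countable closed set: assume κ > 0, f : [0, τ₀] → ℝ is defined by f(τ) = c(H + τK₁) where K₁ ≤ 0 with min K₁ = −1, and suppose f is continuous, f(0) = c(H) ∈ (0, κ), and for each τ either f(τ) ∈ κℤ or f(τ) = c(H) − τ. Then c(H + c(H)·K₁) = 0, i.e., the function K = c(H)·K₁ is a spectral killer for H with ‖K‖_{C⁰} = c(H). -/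
/-- Existence of slow spectral killers, abstractly: if the spectral-invariant functional
`c` is stable, `κ > 0`, `K₁ ≤ 0` has minimum `−1`, `f(τ) = c(H + τ·K₁)` is continuous on
`[0, c(H)]` with `c(H) ∈ (0,κ)`, and for each `τ` either `f(τ) ∈ κℤ` or
`f(τ) = c(H) − τ`, then `K = c(H)·K₁` is a spectral killer for `H`:
`c(H + K) = 0` and `‖K‖_{C⁰} = c(H)`. -/
theorem slow_spectral_killer
    {M : Type*} [TopologicalSpace M] [CompactSpace M] [Nonempty M]
    (c : (M → ℝ → ℝ) → ℝ)
    (stability : ∀ F G : M → ℝ → ℝ,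
      (∫ t in (0:ℝ)..1, ⨅ x : M, (F x t - G x t)) ≤ c F - c G ∧
        c F - c G ≤ ∫ t in (0:ℝ)..1, ⨆ x : M, (F x t - G x t))
    (κ : ℝ) (hκ : 0 < κ)
    (H : M → ℝ → ℝ) (K₁ : M → ℝ)
    (hK₁nonpos : ∀ x, K₁ x ≤ 0)
    (hK₁ge : ∀ x, -1 ≤ K₁ x)
    (hK₁min : ∃ x, K₁ x = -1)
    (hcont : ContinuousOn (fun τ => c (fun x t => H x t + τ * K₁ x))
      (Set.Icc 0 (c H)))
    (hcH : c H ∈ Set.Ioo 0 κ)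
    (hbif : ∀ τ ∈ Set.Icc 0 (c H),
      (∃ m : ℤ, c (fun x t => H x t + τ * K₁ x) = m * κ) ∨
        c (fun x t => H x t + τ * K₁ x) = c H - τ) :
    c (fun x t => H x t + c H * K₁ x) = 0 ∧
      (⨆ x : M, |c H * K₁ x|) = c H := by
  obtain ⟨hcH0, hcHκ⟩ := hcH
  obtain ⟨x₀, hx₀⟩ := hK₁min
  have hbdd : BddBelow (Set.range fun x => c H * K₁ x) := by
    refine ⟨-(c H), Set.forall_mem_range.mpr fun x => ?_⟩
    show -(c H) ≤ c H * K₁ x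
    nlinarith [mul_le_mul_of_nonneg_left (hK₁ge x) hcH0.le]
  -- infimum of c H * K₁ is -(c H)
  have hinf : (⨅ x : M, c H * K₁ x) = -(c H) := by
    apply le_antisymm
    · calc (⨅ x : M, c H * K₁ x) ≤ c H * K₁ x₀ := ciInf_le hbdd x₀
        _ = -(c H) := by rw [hx₀]; ring
    · exact le_ciInf fun x => by
        nlinarith [mul_le_mul_of_nonneg_left (hK₁ge x) hcH0.le]
  -- supremum of c H * K₁ is ≤ 0
  have hsup : (⨆ x : M, c H * K₁ x) ≤ 0 :=
    ciSup_le fun x => mul_nonpos_of_nonneg_of_nonpos hcH0.le (hK₁nonpos x)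
  obtain ⟨hlo, hhi⟩ := stability (fun x t => H x t + c H * K₁ x) H
  have hintlo : (∫ t in (0:ℝ)..1,
      ⨅ x : M, ((fun x t => H x t + c H * K₁ x) x t - H x t)) = -(c H) := by
    have h1 : (fun t => ⨅ x : M, ((fun x t => H x t + c H * K₁ x) x t - H x t))
        = fun _ : ℝ => -(c H) := by
      funext t
      rw [← hinf]
      exact iInf_congr fun x => by ring
    rw [h1]
    simp
  have hinthi : (∫ t in (0:ℝ)..1,
      ⨆ x : M, ((fun x t => H x t + c H * K₁ x) x t - H x t)) ≤ 0 := by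
    have h1 : (fun t => ⨆ x : M, ((fun x t => H x t + c H * K₁ x) x t - H x t))
        = fun _ : ℝ => ⨆ x : M, c H * K₁ x := by
      funext t
      exact iSup_congr fun x => by ring
    rw [h1]
    simp only [intervalIntegral.integral_const, smul_eq_mul, sub_zero, one_mul]
    linarith
  -- so 0 ≤ c F ≤ c H < κ
  have hFlo : 0 ≤ c (fun x t => H x t + c H * K₁ x) := by
    rw [hintlo] at hlo; linarith
  have hFhi : c (fun x t => H x t + c H * K₁ x) < κ := by linarith
  constructor
  · rcases hbif (c H) ⟨hcH0.le, le_refl _⟩ with ⟨m, hm⟩ | h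
    · -- c F = m * κ with 0 ≤ m κ < κ forces m = 0
      have hm0 : m = 0 := by
        by_contra hne
        rcases lt_or_gt_of_ne hne with hneg | hpos
        · have hmR : (m : ℝ) < 0 := by exact_mod_cast hneg
          nlinarith
        · have hmR : (1 : ℝ) ≤ (m : ℝ) := by exact_mod_cast hpos
          nlinarith
      rw [hm, hm0]
      simp
    · rw [h]; ring
  · apply le_antisymm
    · exact ciSup_le fun x => by
        rw [abs_of_nonpos (mul_nonpos_of_nonneg_of_nonpos hcH0.le (hK₁nonpos x))]
        nlinarith [mul_le_mul_of_nonneg_left (hK₁ge x) hcH0.le]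
    · have habs : |c H * K₁ x₀| = c H := by
        rw [hx₀, mul_neg_one, abs_neg, abs_of_pos hcH0]
      calc c H = |c H * K₁ x₀| := habs.symm
        _ ≤ ⨆ x : M, |c H * K₁ x| := by
            refine le_ciSup (f := fun x => |c H * K₁ x|) ⟨c H, Set.forall_mem_range.mpr fun x => ?_⟩ x₀
            show |c H * K₁ x| ≤ c H
            rw [abs_of_nonpos (mul_nonpos_of_nonneg_of_nonpos hcH0.le (hK₁nonpos x))]
            nlinarith [mul_le_mul_of_nonneg_left (hK₁ge x) hcH0.le]
end
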